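/- arXiv:1402.6539 — 7 statements merged into one kernel-verified Lean document; each statement's English description precedes it below -/
import Mathlib

section
/- For every natural number n ≥ 1, the function F_n(t) = Σ_{k=0}^{n} (C(n,k) t^k (1-t)^{n-k})² is convex on the interval [0,1]. -/
/-!
Expanding `(t w + (1 - t))ⁿ` by the binomial theorem gives a polynomial in `w` whose coefficients
are the Bernstein values `b_{n,k}(t)`. Parseval's identity over the `(n+1)`-st roots of unity `ζʲ`
therefore gives `(n + 1) F_n(t) = ∑ⱼ |t ζʲ + (1 - t)|²ⁿ`, and each summand is a power of the norm of
an affine function of `t`, hence convex on all of `ℝ`.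
-/

/-- The sum of the squared Bernstein basis polynomials:
`F_n(t) = ∑_{k=0}^{n} (C(n,k) t^k (1-t)^{n-k})²`. -/
noncomputable def bernsteinSqSum (n : ℕ) (t : ℝ) : ℝ :=
  ∑ k ∈ Finset.range (n + 1), ((n.choose k : ℝ) * t ^ k * (1 - t) ^ (n - k)) ^ 2

open Finset ComplexConjugate

theorem ConvexOn.sum {𝕜 E β ι : Type*} [Semiring 𝕜] [PartialOrder 𝕜] [AddCommMonoid E]
    [AddCommMonoid β] [PartialOrder β] [IsOrderedAddMonoid β] [SMul 𝕜 E] [Module 𝕜 β]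
    {s : Set E} (hs : Convex 𝕜 s) {t : Finset ι} {f : ι → E → β}
    (hf : ∀ i ∈ t, ConvexOn 𝕜 s (f i)) : ConvexOn 𝕜 s (∑ i ∈ t, f i) :=
  Finset.sum_induction f (ConvexOn 𝕜 s) (fun _ _ => ConvexOn.add) (convexOn_const (0 : β) hs) hf

theorem convexOn_norm_lineMap_pow {E : Type*} [SeminormedAddCommGroup E] [NormedSpace ℝ E]
    (a b : E) (n : ℕ) : ConvexOn ℝ Set.univ fun t : ℝ => ‖AffineMap.lineMap a b t‖ ^ n :=
  ((convexOn_univ_norm.comp_affineMap (AffineMap.lineMap a b)).pow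
    (fun _ _ => norm_nonneg _) n)

namespace IsPrimitiveRoot

variable {ζ : ℂ} {N : ℕ}

theorem sum_pow_mul_conj_pow (hζ : IsPrimitiveRoot ζ N) {k l : ℕ} (hk : k < N) (hl : l < N) :
    ∑ j ∈ range N, (ζ ^ j) ^ k * conj ((ζ ^ j) ^ l) = if k = l then (N : ℂ) else 0 := by
  have hN : N ≠ 0 := by omega
  have hζ0 : ζ ≠ 0 := hζ.ne_zero hN
  have hconj : conj ζ = ζ⁻¹ := (Complex.inv_eq_conj (hζ.norm'_eq_one hN)).symm
  have hsummand : ∀ j, (ζ ^ j) ^ k * conj ((ζ ^ j) ^ l) = (ζ ^ k / ζ ^ l) ^ j := fun j => by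
    rw [map_pow, map_pow, hconj, div_eq_mul_inv, mul_pow, inv_pow, inv_pow, inv_pow,
      ← pow_mul, ← pow_mul, ← pow_mul, ← pow_mul, mul_comm j k, mul_comm j l]
  simp_rw [hsummand]
  split_ifs with hkl
  · simp [hkl, hζ0]
  · have hw : ζ ^ k / ζ ^ l ≠ 1 := fun h =>
      hkl (hζ.pow_inj hk hl (div_eq_one_iff_eq (pow_ne_zero _ hζ0) |>.mp h))
    rw [geom_sum_eq hw, div_pow, ← pow_mul, ← pow_mul, pow_mul', pow_mul', hζ.pow_eq_one,
      one_pow, one_pow, div_one, sub_self, zero_div]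

theorem sum_norm_sq_sum_mul_pow (hζ : IsPrimitiveRoot ζ N) {m : ℕ} (hm : m ≤ N) (a : ℕ → ℂ) :
    ∑ j ∈ range N, ‖∑ k ∈ range m, a k * (ζ ^ j) ^ k‖ ^ 2 = N * ∑ k ∈ range m, ‖a k‖ ^ 2 := by
  apply Complex.ofReal_injective
  push_cast
  simp_rw [← Complex.mul_conj', map_sum, map_mul, sum_mul_sum, mul_sum]
  rw [sum_comm]
  refine sum_congr rfl fun k hk => ?_
  have hkN : k < N := (mem_range.mp hk).trans_le hm
  calc ∑ j ∈ range N, ∑ l ∈ range m, a k * (ζ ^ j) ^ k * (conj (a l) * conj ((ζ ^ j) ^ l))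
      = ∑ l ∈ range m, a k * conj (a l) *
          ∑ j ∈ range N, (ζ ^ j) ^ k * conj ((ζ ^ j) ^ l) := by
        rw [sum_comm]
        refine sum_congr rfl fun l _ => ?_
        rw [mul_sum]
        refine sum_congr rfl fun j _ => ?_
        ring
    _ = ∑ l ∈ range m, a k * conj (a l) * if k = l then (N : ℂ) else 0 :=
        sum_congr rfl fun l hl => by
          rw [hζ.sum_pow_mul_conj_pow hkN ((mem_range.mp hl).trans_le hm)]
    _ = N * (a k * conj (a k)) := by simp [hk, mul_comm]

end IsPrimitiveRoot

theorem lineMap_one_pow_eq_sum (w : ℂ) (n : ℕ) (t : ℝ) :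
    AffineMap.lineMap (1 : ℂ) w t ^ n =
      ∑ k ∈ range (n + 1), (((n.choose k : ℝ) * t ^ k * (1 - t) ^ (n - k) : ℝ) : ℂ) * w ^ k := by
  rw [AffineMap.lineMap_apply_module, add_comm, add_pow]
  refine sum_congr rfl fun k _ => ?_
  simp only [Complex.real_smul, mul_one]
  push_cast
  ring

theorem natCast_mul_bernsteinSqSum {ζ : ℂ} {N n : ℕ} (hζ : IsPrimitiveRoot ζ N) (hn : n < N)
    (t : ℝ) :
    N * bernsteinSqSum n t = ∑ j ∈ range N, ‖AffineMap.lineMap (1 : ℂ) (ζ ^ j) t‖ ^ (2 * n) := by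
  simp_rw [pow_mul', ← norm_pow _ n, lineMap_one_pow_eq_sum,
    hζ.sum_norm_sq_sum_mul_pow (Nat.succ_le_of_lt hn), Complex.norm_real, Real.norm_eq_abs,
    sq_abs, bernsteinSqSum]

theorem convexOn_univ_bernsteinSqSum (n : ℕ) : ConvexOn ℝ Set.univ (bernsteinSqSum n) := by
  obtain ⟨ζ, hζ⟩ : ∃ ζ : ℂ, IsPrimitiveRoot ζ (n + 1) :=
    ⟨_, Complex.isPrimitiveRoot_exp (n + 1) n.succ_ne_zero⟩
  have hF : bernsteinSqSum n = ((n + 1 : ℕ) : ℝ)⁻¹ •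
      ∑ j ∈ range (n + 1), fun t : ℝ => ‖AffineMap.lineMap (1 : ℂ) (ζ ^ j) t‖ ^ (2 * n) := by
    ext t
    simp only [Pi.smul_apply, Finset.sum_apply, smul_eq_mul,
      ← natCast_mul_bernsteinSqSum hζ n.lt_succ_self t]
    field_simp
  rw [hF]
  exact (ConvexOn.sum convex_univ fun j _ => convexOn_norm_lineMap_pow _ _ _).smul (by positivity)

theorem rasa_conjecture_general (n : ℕ) :
    ConvexOn ℝ (Set.Icc (0 : ℝ) 1) (bernsteinSqSum n) :=
  (convexOn_univ_bernsteinSqSum n).subset (Set.subset_univ _) (convex_Icc 0 1)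

theorem rasa_conjecture (n : ℕ) (hn : 1 ≤ n) :
    ConvexOn ℝ (Set.Icc (0 : ℝ) 1) (bernsteinSqSum n) :=
  rasa_conjecture_general n
end

section
/- Let n ∈ ℕ, t ∈ [0, 1/2), and set x = x(t) = (1/2)(1-2t + 1/(1-2t)). Then x ≥ 1, 1-2t = x - √(x²-1), and F_n(t) = (x - √(x²-1))^n P_n(x), where F_n(t) = Σ_{k=0}^{n} (C(n,k) t^k (1-t)^{n-k})² and P_n is the n-th Legendre polynomial. -/
/-- The `n`-th Legendre polynomial, via Rodrigues' formula
`P_n(x) = (1/(2^n n!)) dⁿ/dxⁿ (x²-1)ⁿ`. -/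
noncomputable def legendreP (n : ℕ) : ℝ → ℝ := fun x =>
  (1 / (2 ^ n * (n.factorial : ℝ))) * iteratedDeriv n (fun y => (y ^ 2 - 1) ^ n) x

open Finset

section
variable {𝕜 : Type*} [NontriviallyNormedField 𝕜]

theorem iteratedDeriv_sub_const_pow (m k : ℕ) (c x : 𝕜) :
    iteratedDeriv k (fun y => (y - c) ^ m) x = m.descFactorial k * (x - c) ^ (m - k) := by
  rw [iteratedDeriv_comp_sub_const (f := fun y => y ^ m)]
  exact iteratedDeriv_pow (x := x - c) m k

theorem iteratedDeriv_add_const_pow (m k : ℕ) (c x : 𝕜) :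
    iteratedDeriv k (fun y => (y + c) ^ m) x = m.descFactorial k * (x + c) ^ (m - k) := by
  rw [iteratedDeriv_comp_add_const (f := fun y => y ^ m)]
  exact iteratedDeriv_pow (x := x + c) m k

end

theorem Nat.choose_mul_descFactorial_mul_descFactorial_sub {n k : ℕ} (hk : k ≤ n) :
    n.choose k * n.descFactorial k * n.descFactorial (n - k) =
      n.factorial * n.choose k ^ 2 := by
  rw [Nat.descFactorial_eq_factorial_mul_choose, Nat.descFactorial_eq_factorial_mul_choose,
    Nat.choose_symm hk, ← Nat.choose_mul_factorial_mul_factorial hk]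
  ring

theorem legendreP_eq_sum (n : ℕ) (x : ℝ) :
    legendreP n x =
      ∑ k ∈ range (n + 1), (n.choose k : ℝ) ^ 2 * ((x - 1) / 2) ^ k * ((x + 1) / 2) ^ (n - k) := by
  have hfactor : (fun y : ℝ => (y ^ 2 - 1) ^ n) = fun y => (y + 1) ^ n * (y - 1) ^ n := by
    funext y; rw [← mul_pow]; ring
  have hleibniz := iteratedDeriv_fun_mul (n := n) (x := x) (f := fun y : ℝ => (y + 1) ^ n)
    (g := fun y => (y - 1) ^ n) (by fun_prop) (by fun_prop)
  rw [legendreP, hfactor, hleibniz, mul_sum]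
  refine sum_congr rfl fun k hk => ?_
  have hkn : k ≤ n := Nat.lt_succ_iff.mp (mem_range.mp hk)
  have hcomb : (n.choose k : ℝ) * n.descFactorial k * n.descFactorial (n - k)
      = n.factorial * n.choose k ^ 2 := by
    exact_mod_cast Nat.choose_mul_descFactorial_mul_descFactorial_sub hkn
  rw [iteratedDeriv_add_const_pow, iteratedDeriv_sub_const_pow, Nat.sub_sub_self hkn, div_pow,
    div_pow, ← pow_mul_pow_sub 2 hkn]
  field_simp
  linear_combination (x + 1) ^ (n - k) * (x - 1) ^ k * hcomb

theorem bernsteinSqSum_eq_pow_mul_legendreP (n : ℕ) {t : ℝ} (ht : 1 - 2 * t ≠ 0) :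
    bernsteinSqSum n t =
      (1 - 2 * t) ^ n * legendreP n ((1 / 2) * (1 - 2 * t + 1 / (1 - 2 * t))) := by
  set u := 1 - 2 * t
  have hminus : ((1 / 2) * (u + 1 / u) - 1) / 2 = t ^ 2 / u := by
    field_simp; ring
  have hplus : ((1 / 2) * (u + 1 / u) + 1) / 2 = (1 - t) ^ 2 / u := by
    field_simp; ring
  rw [legendreP_eq_sum, hminus, hplus, bernsteinSqSum, mul_sum]
  refine sum_congr rfl fun k hk => ?_
  have hkn : k ≤ n := Nat.lt_succ_iff.mp (mem_range.mp hk)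
  rw [div_pow, div_pow, ← pow_mul_pow_sub u hkn]
  field_simp
  simp only [← pow_mul, mul_comm k, mul_comm (n - k)]

theorem one_le_of_eq_half_mul_add_inv {u x : ℝ} (hu : 0 < u) (hx : x = 1 / 2 * (u + 1 / u)) :
    1 ≤ x := by
  rw [hx, ← sub_nonneg]
  have : 1 / 2 * (u + 1 / u) - 1 = (u - 1) ^ 2 / (2 * u) := by field_simp; ring
  rw [this]
  positivity

theorem sub_sqrt_sq_sub_one_of_eq_half_mul_add_inv {u x : ℝ} (hu0 : 0 < u) (hu1 : u ≤ 1)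
    (hx : x = 1 / 2 * (u + 1 / u)) : x - √(x ^ 2 - 1) = u := by
  have hsq : x ^ 2 - 1 = ((1 - u ^ 2) / (2 * u)) ^ 2 := by rw [hx]; field_simp; ring
  have hnonneg : 0 ≤ (1 - u ^ 2) / (2 * u) := div_nonneg (by nlinarith) (by positivity)
  rw [hsq, Real.sqrt_sq hnonneg, hx]
  field_simp
  ring

theorem bernsteinSqSum_eq_legendre (n : ℕ) (t x : ℝ) (ht : t ∈ Set.Ico (0 : ℝ) (1 / 2))
    (hx : x = (1 / 2) * (1 - 2 * t + 1 / (1 - 2 * t))) :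
    1 ≤ x ∧ 1 - 2 * t = x - Real.sqrt (x ^ 2 - 1) ∧
      bernsteinSqSum n t = (x - Real.sqrt (x ^ 2 - 1)) ^ n * legendreP n x := by
  obtain ⟨ht0, ht2⟩ := ht
  have hu0 : 0 < 1 - 2 * t := by linarith
  have hroot := sub_sqrt_sq_sub_one_of_eq_half_mul_add_inv hu0 (by linarith) hx
  refine ⟨one_le_of_eq_half_mul_add_inv hu0 hx, hroot.symm, ?_⟩
  rw [hroot, hx]
  exact bernsteinSqSum_eq_pow_mul_legendreP n hu0.ne'
end

section
/- For every natural number n ≥ 1 and every real x ≥ 1, the n-th Legendre polynomial satisfies P_n'(x)/P_n(x) ≤ 2n²/(x + (2n-1)√(x²-1)). -/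
/-!
Work with the unnormalised Rodrigues polynomials `Rₙ = dⁿ/dXⁿ (X² - 1)ⁿ = 2ⁿ n! Pₙ`; the ratio
`P'ₙ / Pₙ = R'ₙ / Rₙ` does not see the normalisation. Leibniz' rule gives
`(X² - 1) R'ₙ₊₁ = (n + 1) (X Rₙ₊₁ - 2 (n + 1) Rₙ)` and the three-term recurrence. Put `s = √(x² - 1)`.
An induction along the three-term recurrence shows `Rₙ > 0` on `[1, ∞)` and the ratio bound
`Rₙ₊₁ (x + 2(n + 1)s) ≤ 2(n + 1)(x + s)(x + (2n + 1)s) Rₙ`; inserting it into the first identity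
gives the claim for `x > 1`. At `x = 1` the identity degenerates, and instead
`2 R'ₙ(1) = n(n + 1) Rₙ(1)` is compared with `2n²` directly.
-/

open Polynomial

section Algebra

variable {R : Type*} [CommRing R]

theorem Polynomial.iterate_derivative_X_mul (k : ℕ) (g : R[X]) :
    derivative^[k + 1] (X * g) = X * derivative^[k + 1] g + (k + 1 : R[X]) * derivative^[k] g := by
  rw [mul_comm, iterate_derivative_mul_X, nsmul_eq_mul]
  push_cast
  ring

theorem Polynomial.iterate_derivative_X_sq_sub_one_mul (k : ℕ) (g : R[X]) :
    derivative^[k + 2] ((X ^ 2 - 1) * g) =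
      (X ^ 2 - 1) * derivative^[k + 2] g + 2 * (k + 2 : R[X]) * X * derivative^[k + 1] g
        + ((k + 2) * (k + 1) : R[X]) * derivative^[k] g := by
  rw [show (X ^ 2 - 1) * g = X * (X * g) - g by ring, iterate_derivative_sub,
    iterate_derivative_X_mul (k + 1), iterate_derivative_X_mul (k + 1),
    iterate_derivative_X_mul k]
  push_cast
  ring

theorem Polynomial.iterate_derivative_X_sq_sub_one_pow_succ (n k : ℕ) :
    derivative^[k + 2] ((X ^ 2 - 1 : R[X]) ^ (n + 1)) =
      2 * (n + 1 : R[X]) * (X * derivative^[k + 1] ((X ^ 2 - 1) ^ n)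
        + (k + 1 : R[X]) * derivative^[k] ((X ^ 2 - 1) ^ n)) := by
  have hderiv : derivative ((X ^ 2 - 1 : R[X]) ^ (n + 1)) =
      ((2 * (n + 1) : ℕ) : R[X]) * (X * (X ^ 2 - 1) ^ n) := by
    rw [derivative_pow]
    simp only [derivative_sub, derivative_X_sq, derivative_one, C_ofNat, map_natCast,
      Nat.add_sub_cancel]
    push_cast
    ring
  rw [Function.iterate_succ_apply, hderiv, iterate_derivative_natCast_mul,
    iterate_derivative_X_mul]
  push_cast
  ring

variable (R) in
noncomputable def rodrigues (n : ℕ) : R[X] := derivative^[n] ((X ^ 2 - 1) ^ n)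

@[simp] theorem rodrigues_zero : rodrigues R 0 = 1 := by simp [rodrigues]

@[simp] theorem rodrigues_one : rodrigues R 1 = 2 * X := by
  simp [rodrigues]; ring

theorem derivative_rodrigues (n : ℕ) :
    derivative (rodrigues R n) = derivative^[n + 1] ((X ^ 2 - 1 : R[X]) ^ n) :=
  (Function.iterate_succ_apply' _ _ _).symm

theorem derivative_rodrigues_succ (n : ℕ) :
    derivative (rodrigues R (n + 1)) =
      2 * (n + 1 : R[X]) * (X * derivative (rodrigues R n) + (n + 1 : R[X]) * rodrigues R n) := by
  rw [derivative_rodrigues, iterate_derivative_X_sq_sub_one_pow_succ, ← derivative_rodrigues,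
    ← rodrigues]

theorem rodrigues_succ (n : ℕ) :
    rodrigues R (n + 1) =
      2 * ((X ^ 2 - 1) * derivative (rodrigues R n) + (n + 1 : R[X]) * X * rodrigues R n) := by
  obtain _ | m := n
  · simp
  set u : R[X] := (X ^ 2 - 1) ^ (m + 1)
  have leibniz : rodrigues R (m + 2) = (X ^ 2 - 1) * derivative (rodrigues R (m + 1))
      + 2 * (m + 2 : R[X]) * X * rodrigues R (m + 1)
      + ((m + 2) * (m + 1) : R[X]) * derivative^[m] u := by
    rw [rodrigues, pow_succ', iterate_derivative_X_sq_sub_one_mul, derivative_rodrigues]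
    rfl
  have chain : rodrigues R (m + 2) =
      2 * (m + 2 : R[X]) * (X * rodrigues R (m + 1) + (m + 1 : R[X]) * derivative^[m] u) := by
    rw [rodrigues, iterate_derivative_X_sq_sub_one_pow_succ, ← rodrigues]
    push_cast
    ring
  push_cast
  linear_combination 2 * leibniz - chain

theorem X_sq_sub_one_mul_derivative_rodrigues_succ (n : ℕ) :
    (X ^ 2 - 1) * derivative (rodrigues R (n + 1)) =
      (n + 1 : R[X]) * (X * rodrigues R (n + 1) - 2 * (n + 1 : R[X]) * rodrigues R n) := by
  linear_combination (X ^ 2 - 1 : R[X]) * derivative_rodrigues_succ (R := R) n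
    - ((n + 1 : R[X]) * X) * rodrigues_succ (R := R) n

theorem rodrigues_add_two (n : ℕ) :
    rodrigues R (n + 2) = 2 * (2 * n + 3 : R[X]) * X * rodrigues R (n + 1)
      - 4 * (n + 1 : R[X]) ^ 2 * rodrigues R n := by
  have h := rodrigues_succ (R := R) (n + 1)
  push_cast at h
  linear_combination h + 2 * X_sq_sub_one_mul_derivative_rodrigues_succ (R := R) n

theorem eval_one_rodrigues_succ (n : ℕ) :
    (rodrigues R (n + 1)).eval 1 = 2 * (n + 1) * (rodrigues R n).eval 1 := by
  simp only [rodrigues_succ, eval_mul, eval_ofNat, eval_add, eval_sub, eval_pow, eval_X,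
    eval_one, eval_natCast]
  ring

theorem two_mul_eval_one_derivative_rodrigues (n : ℕ) :
    2 * (derivative (rodrigues R n)).eval 1 = n * (n + 1) * (rodrigues R n).eval 1 := by
  induction n with
  | zero => simp
  | succ k ih =>
    have h := congrArg (eval 1) (derivative_rodrigues_succ (R := R) k)
    simp only [eval_mul, eval_add, eval_X, eval_natCast, eval_ofNat, eval_one] at h
    rw [h, eval_one_rodrigues_succ]
    push_cast
    linear_combination (2 * ((k : R) + 1)) * ih

end Algebra

section Real

variable {x s : ℝ}

theorem eval_rodrigues_add_two (n : ℕ) (x : ℝ) :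
    (rodrigues ℝ (n + 2)).eval x = 2 * (2 * n + 3) * x * (rodrigues ℝ (n + 1)).eval x
      - 4 * (n + 1) ^ 2 * (rodrigues ℝ n).eval x := by
  simpa using congrArg (eval x) (rodrigues_add_two (R := ℝ) n)

theorem eval_X_sq_sub_one_mul_derivative_rodrigues_succ (n : ℕ) (x : ℝ) :
    (x ^ 2 - 1) * (derivative (rodrigues ℝ (n + 1))).eval x =
      (n + 1) * (x * (rodrigues ℝ (n + 1)).eval x - 2 * (n + 1) * (rodrigues ℝ n).eval x) := by
  simpa using congrArg (eval x) (X_sq_sub_one_mul_derivative_rodrigues_succ (R := ℝ) n)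

theorem eval_rodrigues_pos_and_le_succ (hx : 1 ≤ x) (n : ℕ) :
    0 < (rodrigues ℝ n).eval x ∧
      2 * (n + 1) * (rodrigues ℝ n).eval x ≤ (rodrigues ℝ (n + 1)).eval x := by
  induction n with
  | zero => simpa using hx
  | succ k ih =>
    obtain ⟨hpos, hle⟩ := ih
    have hpos' : 0 < (rodrigues ℝ (k + 1)).eval x := by nlinarith
    refine ⟨hpos', ?_⟩
    rw [eval_rodrigues_add_two]
    push_cast
    nlinarith [mul_le_mul_of_nonneg_left hle (by positivity : (0 : ℝ) ≤ 2 * (k + 1)),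
      mul_le_mul_of_nonneg_left hpos'.le (by linarith : (0 : ℝ) ≤ x - 1)]

theorem eval_rodrigues_pos (hx : 1 ≤ x) (n : ℕ) : 0 < (rodrigues ℝ n).eval x :=
  (eval_rodrigues_pos_and_le_succ hx n).1

theorem eval_rodrigues_succ_mul_le (hx : 1 ≤ x) (hs : 0 ≤ s) (hs2 : s ^ 2 = x ^ 2 - 1) (n : ℕ) :
    (rodrigues ℝ (n + 1)).eval x * (x + 2 * (n + 1) * s) ≤
      2 * (n + 1) * ((x + s) * (x + (2 * n + 1) * s)) * (rodrigues ℝ n).eval x := by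
  induction n with
  | zero =>
    simp only [zero_add, rodrigues_one, rodrigues_zero, eval_mul, eval_ofNat, eval_X, eval_one]
    push_cast
    nlinarith [sq_nonneg s]
  | succ k ih =>
    have hb := eval_rodrigues_pos hx (k + 1)
    have hD : 0 < (x + s) * (x + (2 * k + 1) * s) := by positivity
    -- The three-term recurrence and the induction hypothesis reduce the step to `0 ≤ Rₖ₊₁(x) * key`.
    have key : 0 ≤ (k + 2) * (x + s) ^ 2 * (x + (2 * k + 3) * s) * (x + (2 * k + 1) * s)
        - (2 * k + 3) * x * (x + s) * (x + (2 * k + 1) * s) * (x + 2 * (k + 2) * s)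
        + (k + 1) * (x + 2 * (k + 1) * s) * (x + 2 * (k + 2) * s) := by
      have : (k + 2) * (x + s) ^ 2 * (x + (2 * k + 3) * s) * (x + (2 * k + 1) * s)
        - (2 * k + 3) * x * (x + s) * (x + (2 * k + 1) * s) * (x + 2 * (k + 2) * s)
        + (k + 1) * (x + 2 * (k + 1) * s) * (x + 2 * (k + 2) * s)
          = (3 * k + 4) * s ^ 2 + 2 * (k + 1) * s ^ 4 + 2 * (k + 1) * x * s ^ 3 := by
        linear_combination ((k + 1) * x ^ 2 + (4 * k ^ 2 + 10 * k + 6) * x * s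
          + (4 * k ^ 3 + 16 * k ^ 2 + 17 * k + 4) * s ^ 2) * hs2
      rw [this]
      positivity
    rw [eval_rodrigues_add_two]
    push_cast
    refine le_of_mul_le_mul_right ?_ hD
    linear_combination
      mul_le_mul_of_nonneg_left ih (by positivity : (0 : ℝ) ≤ 2 * (k + 1) * (x + 2 * (k + 2) * s))
        + 2 * mul_nonneg hb.le key

theorem eval_derivative_rodrigues_mul_le (hx : 1 ≤ x) (hs : 0 ≤ s) (hs2 : s ^ 2 = x ^ 2 - 1)
    (n : ℕ) :
    (derivative (rodrigues ℝ n)).eval x * (x + (2 * n - 1) * s) ≤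
      2 * n ^ 2 * (rodrigues ℝ n).eval x := by
  obtain _ | k := n
  · simp
  have hb := eval_rodrigues_pos hx (k + 1)
  obtain rfl | hx1 := hx.eq_or_lt
  · obtain rfl : s = 0 := by simpa using hs2
    have h := two_mul_eval_one_derivative_rodrigues (R := ℝ) (k + 1)
    have hnonneg : 0 ≤ ((k : ℝ) + 1) * (3 * k + 2) * (rodrigues ℝ (k + 1)).eval 1 := by positivity
    push_cast at h ⊢
    linear_combination h / 2 + hnonneg / 2
  have hs0 : 0 < s := by nlinarith
  refine le_of_mul_le_mul_right ?_ (by positivity : 0 < s ^ 2 * (x + s))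
  have hd := eval_X_sq_sub_one_mul_derivative_rodrigues_succ k x
  have hr := eval_rodrigues_succ_mul_le hx hs hs2 k
  rw [← hs2] at hd
  push_cast
  calc (derivative (rodrigues ℝ (k + 1))).eval x * (x + (2 * (k + 1) - 1) * s) * (s ^ 2 * (x + s))
      = (k + 1) * ((x + s) * (x + (2 * k + 1) * s)) * (x * (rodrigues ℝ (k + 1)).eval x
          - 2 * (k + 1) * (rodrigues ℝ k).eval x) := by
        linear_combination ((x + s) * (x + (2 * k + 1) * s)) * hd
    _ ≤ (k + 1) * (rodrigues ℝ (k + 1)).eval x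
          * (x * (x + s) * (x + (2 * k + 1) * s) - (x + 2 * (k + 1) * s)) := by
        linear_combination mul_le_mul_of_nonneg_left hr (by positivity : (0 : ℝ) ≤ k + 1)
    _ = 2 * (k + 1) ^ 2 * (rodrigues ℝ (k + 1)).eval x * (s ^ 2 * (x + s)) := by
        linear_combination (-(k + 1) * (rodrigues ℝ (k + 1)).eval x * (x + 2 * (k + 1) * s)) * hs2

end Real

theorem Polynomial.iteratedDeriv_eval {𝕜 : Type*} [NontriviallyNormedField 𝕜] (p : 𝕜[X]) (k : ℕ) :
    iteratedDeriv k (fun y => p.eval y) = fun y => (derivative^[k] p).eval y := by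
  induction k with
  | zero => simp
  | succ k ih =>
    funext y
    rw [iteratedDeriv_succ, ih, Function.iterate_succ_apply']
    exact Polynomial.deriv _

theorem legendreP_eq (n : ℕ) :
    legendreP n = fun x => (1 / (2 ^ n * (n.factorial : ℝ))) * (rodrigues ℝ n).eval x := by
  have h : (fun y : ℝ => (y ^ 2 - 1) ^ n) = fun y => ((X ^ 2 - 1 : ℝ[X]) ^ n).eval y := by
    simp
  unfold legendreP
  rw [h, iteratedDeriv_eval]
  rfl

theorem deriv_legendreP_div_legendreP (n : ℕ) (x : ℝ) :
    deriv (legendreP n) x / legendreP n x =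
      (derivative (rodrigues ℝ n)).eval x / (rodrigues ℝ n).eval x := by
  rw [legendreP_eq, deriv_const_mul_field, Polynomial.deriv, mul_div_mul_left]
  positivity

theorem legendre_ratio_upper_bound_general (n : ℕ) (x : ℝ) (hx : 1 ≤ x) :
    deriv (legendreP n) x / legendreP n x ≤
      2 * (n : ℝ) ^ 2 / (x + (2 * (n : ℝ) - 1) * Real.sqrt (x ^ 2 - 1)) := by
  have hs : 0 ≤ √(x ^ 2 - 1) := Real.sqrt_nonneg _
  have hs2 : √(x ^ 2 - 1) ^ 2 = x ^ 2 - 1 := Real.sq_sqrt (by nlinarith)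
  have hsx : √(x ^ 2 - 1) < x := by nlinarith
  have hden : 0 < x + (2 * (n : ℝ) - 1) * √(x ^ 2 - 1) := by
    nlinarith [mul_nonneg (n.cast_nonneg : (0 : ℝ) ≤ n) hs]
  rw [deriv_legendreP_div_legendreP, div_le_div_iff₀ (eval_rodrigues_pos hx n) hden]
  exact eval_derivative_rodrigues_mul_le hx hs hs2 n

theorem legendre_ratio_upper_bound (n : ℕ) (hn : 1 ≤ n) (x : ℝ) (hx : 1 ≤ x) :
    deriv (legendreP n) x / legendreP n x ≤
      2 * (n : ℝ) ^ 2 / (x + (2 * (n : ℝ) - 1) * Real.sqrt (x ^ 2 - 1)) :=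
  legendre_ratio_upper_bound_general n x hx
end

section
/- Let n ∈ ℕ, n ≥ 1, and λ > -1/2. Then for every real x ≥ 1, u_n(x) = (P_n^{(λ)})'(x)/P_n^{(λ)}(x) ≥ n(n+2λ)/((2λ+1)x + (n-1)√(x²-1)). -/
/-!
With `s = √(x² - 1)`, put `q_n = (n + 2λ - 1) P_{n-1}(x) / (n P_n(x))` (for `λ = 0`, simply
`q_n = T_{n-1}(x) / T_n(x)`). In both cases `q_1 = 1 / x`, the three-term recurrence reads
`q_{n+1} = (n + 2λ) / (2 (n + λ) x - n q_n)`, and the differential identity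
`(x² - 1) P_n' = n x P_n - (n + 2λ - 1) P_{n-1}` (resp. `(x² - 1) T_n' = n (x T_n - T_{n-1})`)
reads `(x² - 1) u_n = n (x - q_n)`. So the bound is equivalent to `q_n ≤ ρ_n`, where
`ρ_n = x - (n + 2λ) s² / ((2λ + 1) x + (n - 1) s)` is `ratioBound λ x s n`.
Now `ρ_1 = 1 / x` and `ρ` is a supersolution of the recursion for `q`: the inequality
`(n + 2λ) / (2 (n + λ) x - n ρ_n) ≤ ρ_{n+1}` has slack proportional to `s³ (x - s) ≥ 0`.
By induction `q_n ≤ ρ_n` (and `P_n(x) ≠ 0`) for all `x ≥ 1`; this gives the bound for `x > 1`,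
and at `x = 1` it follows by continuity.
-/

/-- Chebyshev polynomials of the first kind (as real functions):
`T_0 = 1`, `T_1 = x`, `T_{n+2}(x) = 2x T_{n+1}(x) - T_n(x)`. -/
noncomputable def chebT : ℕ → ℝ → ℝ
  | 0 => fun _ => 1
  | 1 => fun x => x
  | n + 2 => fun x => 2 * x * chebT (n + 1) x - chebT n x

/-- The ultraspherical (Gegenbauer) polynomials for `lam ≠ 0`, via
`P_0 = 1`, `P_1 = 2λx`, `(n+1)P_{n+1}(x) = 2(n+λ)x P_n(x) - (n+2λ-1)P_{n-1}(x)`. -/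
noncomputable def gegenRec (lam : ℝ) : ℕ → ℝ → ℝ
  | 0 => fun _ => 1
  | 1 => fun x => 2 * lam * x
  | n + 2 => fun x =>
      (2 * ((n : ℝ) + 1 + lam) * x * gegenRec lam (n + 1) x -
        ((n : ℝ) + 2 * lam) * gegenRec lam n x) / ((n : ℝ) + 2)

/-- The `n`-th ultraspherical polynomial `P_n^{(λ)}`; for `λ = 0` it is taken to be the
Chebyshev polynomial of the first kind `T_n`. -/
noncomputable def ultra (lam : ℝ) (n : ℕ) : ℝ → ℝ :=
  if lam = 0 then chebT n else gegenRec lam n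

/-- The ratio `u_n(x) = (P_n^{(λ)})'(x) / P_n^{(λ)}(x)`. -/
noncomputable def uRatio (lam : ℝ) (n : ℕ) (x : ℝ) : ℝ :=
  deriv (ultra lam n) x / ultra lam n x

noncomputable def ratioBound (lam x s m : ℝ) : ℝ :=
  x - (m + 2 * lam) * s ^ 2 / ((2 * lam + 1) * x + (m - 1) * s)

section RatioBound

variable {lam x s m t : ℝ}

lemma ratioBound_denom_pos (hlam : -(1 / 2) < lam) (hm : 1 ≤ m) (hx : 0 < x) (hs0 : 0 ≤ s) :
    0 < (2 * lam + 1) * x + (m - 1) * s := by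
  nlinarith [mul_nonneg (sub_nonneg.2 hm) hs0]

lemma ratioBound_mul_denom (hD : (2 * lam + 1) * x + (m - 1) * s ≠ 0) (hs : s ^ 2 = x ^ 2 - 1) :
    ratioBound lam x s m * ((2 * lam + 1) * x + (m - 1) * s) =
      2 * lam + 1 + (m - 1) * s * (x - s) := by
  rw [ratioBound, sub_mul, div_mul_cancel₀ _ hD]
  linear_combination (-(2 * lam + 1)) * hs

lemma ratioBound_pos (hlam : -(1 / 2) < lam) (hm : 1 ≤ m) (hx : 0 < x) (hs0 : 0 ≤ s)
    (hs : s ^ 2 = x ^ 2 - 1) : 0 < ratioBound lam x s m := by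
  have hD := ratioBound_denom_pos hlam hm hx hs0
  refine pos_of_mul_pos_left ?_ hD.le
  rw [ratioBound_mul_denom hD.ne' hs]
  have hxs : 0 < x - s := by nlinarith
  nlinarith [mul_nonneg (mul_nonneg (sub_nonneg.2 hm) hs0) hxs.le]

lemma denom_le_ratioBound_succ_mul (hlam : -(1 / 2) < lam) (hm : 0 ≤ m) (hx : 0 < x)
    (hs0 : 0 ≤ s) (hs : s ^ 2 = x ^ 2 - 1) :
    (2 * lam + 1) * x + (m - 1) * s ≤
      ratioBound lam x s (m + 1) * (x * ((2 * lam + 1) * x + (m - 1) * s) + m * s ^ 2) := by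
  have hD' := ratioBound_denom_pos hlam (m := m + 1) (by linarith) hx hs0
  have hE' := ratioBound_mul_denom hD'.ne' hs
  refine le_of_mul_le_mul_right ?_ hD'
  have hgap : 0 ≤ m * (2 * lam + 2) * s ^ 3 * (x - s) := by
    have : 0 ≤ 2 * lam + 2 := by linarith
    have : 0 ≤ x - s := by nlinarith
    positivity
  calc ((2 * lam + 1) * x + (m - 1) * s) * ((2 * lam + 1) * x + (m + 1 - 1) * s)
      ≤ ((2 * lam + 1) * x + (m - 1) * s) * ((2 * lam + 1) * x + (m + 1 - 1) * s) +
        m * (2 * lam + 2) * s ^ 3 * (x - s) := le_add_of_nonneg_right hgap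
    _ = ratioBound lam x s (m + 1) * (x * ((2 * lam + 1) * x + (m - 1) * s) + m * s ^ 2) *
        ((2 * lam + 1) * x + (m + 1 - 1) * s) := by
      linear_combination (-(x * ((2 * lam + 1) * x + (m - 1) * s) + m * s ^ 2)) * hE' -
        (m * s ^ 2 * (2 * lam + 2) - m * (2 * lam + 1) * x * s - m ^ 2 * s ^ 2) * hs

lemma ratioBound_step (hlam : -(1 / 2) < lam) (hm : 1 ≤ m) (hx : 0 < x) (hs0 : 0 ≤ s)
    (hs : s ^ 2 = x ^ 2 - 1) (ht : t ≤ ratioBound lam x s m) :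
    0 < 2 * (m + lam) * x - m * t ∧
      m + 2 * lam ≤ ratioBound lam x s (m + 1) * (2 * (m + lam) * x - m * t) := by
  have hD := ratioBound_denom_pos hlam hm hx hs0
  have hcore := denom_le_ratioBound_succ_mul hlam (m := m) (by linarith) hx hs0 hs
  have hmul : (2 * (m + lam) * x - m * ratioBound lam x s m) *
      ((2 * lam + 1) * x + (m - 1) * s) =
      (m + 2 * lam) * (x * ((2 * lam + 1) * x + (m - 1) * s) + m * s ^ 2) := by
    linear_combination (-m) * ratioBound_mul_denom hD.ne' hs - m * (2 * lam + 1) * hs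
  have hN : 0 < x * ((2 * lam + 1) * x + (m - 1) * s) + m * s ^ 2 := by
    have : 0 ≤ m * s ^ 2 := mul_nonneg (by linarith) (sq_nonneg s)
    nlinarith
  have hpos : 0 < 2 * (m + lam) * x - m * ratioBound lam x s m :=
    pos_of_mul_pos_left (hmul ▸ mul_pos (by linarith) hN) hD.le
  have hmono : 2 * (m + lam) * x - m * ratioBound lam x s m ≤ 2 * (m + lam) * x - m * t := by
    nlinarith
  refine ⟨hpos.trans_le hmono, ?_⟩
  calc m + 2 * lam
        ≤ ratioBound lam x s (m + 1) * (2 * (m + lam) * x - m * ratioBound lam x s m) := by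
        refine le_of_mul_le_mul_right ?_ hD
        rw [mul_assoc, hmul]
        nlinarith
    _ ≤ ratioBound lam x s (m + 1) * (2 * (m + lam) * x - m * t) :=
        mul_le_mul_of_nonneg_left hmono (ratioBound_pos hlam (by linarith) hx hs0 hs).le

lemma ratioBound_one (hlam : 2 * lam + 1 ≠ 0) (hx : x ≠ 0) (hs : s ^ 2 = x ^ 2 - 1) :
    ratioBound lam x s 1 = 1 / x := by
  rw [ratioBound, sub_self, zero_mul, add_zero, add_comm 1, mul_div_mul_left _ _ hlam]
  field_simp
  linear_combination (-1 : ℝ) * hs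

lemma ne_zero_and_ratio_le_ratioBound_succ {p q c : ℝ} (hlam : -(1 / 2) < lam) (hm : 1 ≤ m)
    (hx : 0 < x) (hs0 : 0 ≤ s) (hs : s ^ 2 = x ^ 2 - 1) (hp : p ≠ 0)
    (hrec : c * q = p * (2 * (m + lam) * x - m * t)) (ht : t ≤ ratioBound lam x s m) :
    q ≠ 0 ∧ (m + 2 * lam) * p / (c * q) ≤ ratioBound lam x s (m + 1) := by
  obtain ⟨hδ, hle⟩ := ratioBound_step hlam hm hx hs0 hs ht
  have hq : q ≠ 0 := by
    rintro rfl
    exact mul_ne_zero hp hδ.ne' (by rw [← hrec, mul_zero])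
  refine ⟨hq, ?_⟩
  rw [hrec, mul_comm p, mul_div_mul_right _ _ hp, div_le_iff₀ hδ]
  exact hle

lemma le_div_of_le_ratioBound {p p' : ℝ} (hlam : -(1 / 2) < lam) (hm : 1 ≤ m) (hx : 1 < x)
    (hs0 : 0 ≤ s) (hs : s ^ 2 = x ^ 2 - 1) (hp : p ≠ 0)
    (hid : (x ^ 2 - 1) * p' = m * p * (x - t)) (ht : t ≤ ratioBound lam x s m) :
    m * (m + 2 * lam) / ((2 * lam + 1) * x + (m - 1) * s) ≤ p' / p := by
  have hD := ratioBound_denom_pos hlam hm (zero_lt_one.trans hx) hs0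
  have hx2 : 0 < x ^ 2 - 1 := by nlinarith
  have hm0 : 0 ≤ m := by linarith
  have hs_ne : s ≠ 0 := by rintro rfl; linarith
  calc m * (m + 2 * lam) / ((2 * lam + 1) * x + (m - 1) * s)
      = m * (x - ratioBound lam x s m) / (x ^ 2 - 1) := by
        rw [ratioBound, sub_sub_cancel, ← hs]
        field_simp
    _ ≤ m * (x - t) / (x ^ 2 - 1) := by gcongr
    _ = p' / p := by
        field_simp
        linear_combination -hid

end RatioBound

section Chebyshev

open Polynomial

lemma chebT_eq_eval : ∀ n : ℕ, chebT n = fun x => (Chebyshev.T ℝ n).eval x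
  | 0 => by ext; simp [chebT]
  | 1 => by ext; simp [chebT]
  | n + 2 => by
    ext x
    have h := Chebyshev.T_add_two ℝ n
    push_cast at h ⊢
    simp [chebT, chebT_eq_eval n, chebT_eq_eval (n + 1), h]

lemma sq_sub_one_mul_deriv_chebT (n : ℕ) (x : ℝ) :
    (x ^ 2 - 1) * deriv (chebT (n + 1)) x = (n + 1) * (x * chebT (n + 1) x - chebT n x) := by
  have h := congrArg (eval x) (Chebyshev.one_sub_X_sq_mul_derivative_T_eq_poly_in_T (R := ℝ) n)
  simp only [eval_mul, eval_sub, eval_one, eval_pow, eval_X, eval_add, Int.cast_natCast,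
    eval_natCast] at h
  rw [chebT_eq_eval, chebT_eq_eval, Polynomial.deriv]
  push_cast at h ⊢
  linear_combination -h

lemma chebT_succ_ne_zero_and_ratio_le {x s : ℝ} (hx : 0 < x) (hs0 : 0 ≤ s)
    (hs : s ^ 2 = x ^ 2 - 1) : ∀ n : ℕ,
    chebT (n + 1) x ≠ 0 ∧ chebT n x / chebT (n + 1) x ≤ ratioBound 0 x s (n + 1)
  | 0 => ⟨hx.ne', by simp [chebT, ratioBound_one (lam := 0) (by norm_num) hx.ne' hs]⟩
  | n + 1 => by
    obtain ⟨hT, ht⟩ := chebT_succ_ne_zero_and_ratio_le hx hs0 hs n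
    have hrec : ((n : ℝ) + 1) * chebT (n + 2) x =
        chebT (n + 1) x * (2 * ((n + 1) + 0) * x - (n + 1) * (chebT n x / chebT (n + 1) x)) := by
      simp only [chebT]
      field_simp
      ring
    have h := ne_zero_and_ratio_le_ratioBound_succ (by norm_num) (by simp) hx hs0 hs hT hrec ht
    rw [mul_zero, add_zero, mul_div_mul_left _ _ (by positivity)] at h
    push_cast
    exact h

end Chebyshev

lemma gegenRec_add_two (lam : ℝ) (n : ℕ) (x : ℝ) :
    ((n : ℝ) + 2) * gegenRec lam (n + 2) x =
      2 * ((n : ℝ) + 1 + lam) * x * gegenRec lam (n + 1) x -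
        ((n : ℝ) + 2 * lam) * gegenRec lam n x :=
  mul_div_cancel₀ _ (by positivity)

lemma contDiff_gegenRec (lam : ℝ) : ∀ n, ContDiff ℝ 1 (gegenRec lam n)
  | 0 => contDiff_const
  | 1 => contDiff_const.mul contDiff_id
  | n + 2 =>
    (((contDiff_const.mul contDiff_id).mul (contDiff_gegenRec lam (n + 1))).sub
      (contDiff_const.mul (contDiff_gegenRec lam n))).div_const _

lemma deriv_gegenRec_add_two (lam : ℝ) (n : ℕ) (x : ℝ) :
    ((n : ℝ) + 2) * deriv (gegenRec lam (n + 2)) x =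
      2 * ((n : ℝ) + 1 + lam) * (gegenRec lam (n + 1) x + x * deriv (gegenRec lam (n + 1)) x) -
        ((n : ℝ) + 2 * lam) * deriv (gegenRec lam n) x := by
  have hd : ∀ k, HasDerivAt (gegenRec lam k) (deriv (gegenRec lam k) x) x := fun k =>
    ((contDiff_gegenRec lam k).differentiable one_ne_zero x).hasDerivAt
  have h : HasDerivAt (gegenRec lam (n + 2)) _ x :=
    ((((hasDerivAt_id x).const_mul (2 * ((n : ℝ) + 1 + lam))).mul (hd (n + 1))).sub
      ((hd n).const_mul ((n : ℝ) + 2 * lam))).div_const ((n : ℝ) + 2)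
  rw [h.deriv, mul_div_cancel₀ _ (by positivity)]
  simp only [id]
  ring

lemma deriv_gegenRec_zero (lam x : ℝ) : deriv (gegenRec lam 0) x = 0 := deriv_const x 1

lemma deriv_gegenRec_one (lam x : ℝ) : deriv (gegenRec lam 1) x = 2 * lam := by
  have h : HasDerivAt (gegenRec lam 1) (2 * lam * 1) x := (hasDerivAt_id' x).const_mul _
  rw [h.deriv, mul_one]

lemma sq_sub_one_mul_deriv_gegenRec (lam x : ℝ) : ∀ n : ℕ,
    (x ^ 2 - 1) * deriv (gegenRec lam (n + 1)) x =
      (n + 1) * x * gegenRec lam (n + 1) x - (n + 2 * lam) * gegenRec lam n x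
  | 0 => by
    rw [deriv_gegenRec_one]
    simp only [gegenRec]
    push_cast
    ring
  | 1 => by
    have h := deriv_gegenRec_add_two lam 0 x
    rw [deriv_gegenRec_one, deriv_gegenRec_zero] at h
    simp only [gegenRec] at h ⊢
    push_cast at h ⊢
    linear_combination (x ^ 2 - 1) / 2 * h
  | n + 2 => by
    have ih₀ := sq_sub_one_mul_deriv_gegenRec lam x n
    have ih₁ := sq_sub_one_mul_deriv_gegenRec lam x (n + 1)
    have hP₂ := gegenRec_add_two lam n x
    have hP₃ := gegenRec_add_two lam (n + 1) x
    have hd₃ := deriv_gegenRec_add_two lam (n + 1) x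
    push_cast at ih₁ hP₃ hd₃ ⊢
    refine mul_left_cancel₀ (show (n : ℝ) + 1 + 2 ≠ 0 by positivity) ?_
    linear_combination (x ^ 2 - 1) * hd₃ + (2 * ((n : ℝ) + 1 + 1 + lam) * x) * ih₁ -
      ((n : ℝ) + 1 + 2 * lam) * ih₀ - (((n : ℝ) + 1 + 2) * x) * hP₃ +
      ((n : ℝ) + 1 + 2 * lam) * hP₂

lemma gegenRec_succ_ne_zero_and_ratio_le {lam x s : ℝ} (hlam : -(1 / 2) < lam)
    (hlam0 : lam ≠ 0) (hx : 0 < x) (hs0 : 0 ≤ s) (hs : s ^ 2 = x ^ 2 - 1) : ∀ n : ℕ,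
    gegenRec lam (n + 1) x ≠ 0 ∧
      (n + 2 * lam) * gegenRec lam n x / ((n + 1) * gegenRec lam (n + 1) x) ≤
        ratioBound lam x s (n + 1)
  | 0 => by
    have h2 : 2 * lam ≠ 0 := mul_ne_zero two_ne_zero hlam0
    refine ⟨mul_ne_zero h2 hx.ne', ?_⟩
    rw [Nat.cast_zero, zero_add, zero_add, ratioBound_one (by linarith) hx.ne' hs]
    refine le_of_eq ?_
    simp only [gegenRec]
    field_simp
  | n + 1 => by
    obtain ⟨hP, ht⟩ := gegenRec_succ_ne_zero_and_ratio_le hlam hlam0 hx hs0 hs n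
    have hrec : ((n : ℝ) + 1 + 1) * gegenRec lam (n + 2) x = gegenRec lam (n + 1) x *
        (2 * ((n + 1) + lam) * x -
          (n + 1) * ((n + 2 * lam) * gegenRec lam n x / ((n + 1) * gegenRec lam (n + 1) x))) := by
      rw [add_assoc, one_add_one_eq_two, gegenRec_add_two]
      field_simp
    have h := ne_zero_and_ratio_le_ratioBound_succ hlam (by simp) hx hs0 hs hP hrec ht
    push_cast
    convert h using 3

lemma contDiff_ultra (lam : ℝ) (n : ℕ) : ContDiff ℝ 1 (ultra lam n) := by
  unfold ultra
  split_ifs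
  · rw [chebT_eq_eval]
    simpa using Polynomial.contDiff_aeval (Polynomial.Chebyshev.T ℝ n) 1
  · exact contDiff_gegenRec lam n

lemma ultra_ne_zero_and_exists_ratio_le {lam x s : ℝ} {n : ℕ} (hlam : -(1 / 2) < lam)
    (hn : 1 ≤ n) (hx : 0 < x) (hs0 : 0 ≤ s) (hs : s ^ 2 = x ^ 2 - 1) :
    ultra lam n x ≠ 0 ∧ ∃ t ≤ ratioBound lam x s n,
      (x ^ 2 - 1) * deriv (ultra lam n) x = n * ultra lam n x * (x - t) := by
  obtain ⟨n, rfl⟩ : ∃ k, n = k + 1 := ⟨n - 1, by omega⟩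
  push_cast
  unfold ultra
  split_ifs with hlam0
  · subst hlam0
    obtain ⟨hT, ht⟩ := chebT_succ_ne_zero_and_ratio_le hx hs0 hs n
    refine ⟨hT, _, ht, ?_⟩
    rw [sq_sub_one_mul_deriv_chebT]
    field_simp
  · obtain ⟨hP, ht⟩ := gegenRec_succ_ne_zero_and_ratio_le hlam hlam0 hx hs0 hs n
    refine ⟨hP, _, ht, ?_⟩
    rw [sq_sub_one_mul_deriv_gegenRec]
    field_simp

theorem ultra_ratio_lower_bound (n : ℕ) (hn : 1 ≤ n) (lam : ℝ) (hlam : -(1 / 2) < lam)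
    (x : ℝ) (hx : 1 ≤ x) :
    uRatio lam n x ≥
      (n : ℝ) * ((n : ℝ) + 2 * lam) /
        ((2 * lam + 1) * x + ((n : ℝ) - 1) * Real.sqrt (x ^ 2 - 1)) := by
  have hm : (1 : ℝ) ≤ n := by exact_mod_cast hn
  have hsqrt : ∀ y : ℝ, 1 ≤ y → √(y ^ 2 - 1) ^ 2 = y ^ 2 - 1 :=
    fun y hy => Real.sq_sqrt (by nlinarith)
  have hspec (y : ℝ) (hy : 1 ≤ y) :=
    ultra_ne_zero_and_exists_ratio_le hlam hn (by linarith) (Real.sqrt_nonneg _) (hsqrt y hy)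
  refine ContinuousWithinAt.closure_le (s := Set.Ioi 1) (g := uRatio lam n)
    (f := fun y => n * (n + 2 * lam) / ((2 * lam + 1) * y + (n - 1) * √(y ^ 2 - 1)))
    (by rwa [closure_Ioi]) ?_ ?_ ?_
  · have hD := ratioBound_denom_pos hlam hm (by linarith) (Real.sqrt_nonneg (x ^ 2 - 1))
    apply ContinuousAt.continuousWithinAt
    exact continuousAt_const.div (by fun_prop) hD.ne'
  · have hc := contDiff_ultra lam n
    exact ((hc.continuous_deriv le_rfl).continuousAt.div hc.continuous.continuousAt
      (hspec x hx).1).continuousWithinAt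
  · intro y hy
    obtain ⟨hne, t, ht, hid⟩ := hspec y hy.le
    exact le_div_of_le_ratioBound hlam hm hy (Real.sqrt_nonneg _) (hsqrt y hy.le) hne hid ht
end

section
/- Let n ∈ ℕ, n ≥ 1, and λ > -1/2. Then for every real x ≥ 1, u_n(x) = (P_n^{(λ)})'(x)/P_n^{(λ)}(x) ≥ n(1/x + (n-1)/(2(n+λ-1)x³)). -/
/-!
Work with `Q_n = P_n^{(λ)} / P_n^{(λ)}(1)`, which has the same logarithmic derivative and satisfies
`(n + 1 + 2λ) Q_{n+2} = 2 (n + 1 + λ) x Q_{n+1} - (n + 1) Q_n`. Put `a_m = m / (2 (m + λ))`.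
For `x ≥ 1` an induction on `m` through the recurrence gives `Q_{m+1}(x) > 0` and
`x³ Q_m(x) ≤ (x² - a_m (x² - 1)) Q_{m+1}(x)`; the induction step reduces to a polynomial inequality
in `y = x²` whose defect is `c (y - 1) ((c + (c + 2λ) a_m) y + c a_m) / (2 (c + λ)) ≥ 0`,
with `c = m + 1`.
Inserting this bound on `Q_m / Q_{m+1}` into `(x² - 1) Q_{m+1}' = (m + 1) (x Q_{m+1} - Q_m)` gives
`x³ Q_{m+1}' ≥ (m + 1) (x² + a_m) Q_{m+1}` for `x > 1`; at `x = 1` it follows from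
`Q_n'(1) = n (n + 2λ) / (1 + 2λ)`.
-/

/-- The ultraspherical polynomial normalised by `Q_n(1) = 1`, i.e. `P_n^{(λ)} / P_n^{(λ)}(1)`.
Unlike `P_n^{(λ)}` it does not degenerate at `λ = 0`, where it is `T_n`. -/
noncomputable def gegenNorm (lam : ℝ) : ℕ → ℝ → ℝ
  | 0 => fun _ => 1
  | 1 => fun x => x
  | n + 2 => fun x =>
      (2 * ((n : ℝ) + 1 + lam) * x * gegenNorm lam (n + 1) x - ((n : ℝ) + 1) * gegenNorm lam n x) /
        ((n : ℝ) + 1 + 2 * lam)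

noncomputable def gegenNormDeriv (lam : ℝ) : ℕ → ℝ → ℝ
  | 0 => fun _ => 0
  | 1 => fun _ => 1
  | n + 2 => fun x =>
      (2 * ((n : ℝ) + 1 + lam) * (gegenNorm lam (n + 1) x + x * gegenNormDeriv lam (n + 1) x) -
        ((n : ℝ) + 1) * gegenNormDeriv lam n x) / ((n : ℝ) + 1 + 2 * lam)

theorem hasDerivAt_gegenNorm (lam : ℝ) (n : ℕ) (x : ℝ) :
    HasDerivAt (gegenNorm lam n) (gegenNormDeriv lam n x) x := by
  induction n using Nat.twoStepInduction generalizing x with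
  | zero => exact hasDerivAt_const x 1
  | one => exact hasDerivAt_id' x
  | more n ih0 ih1 =>
    have hQ : gegenNorm lam (n + 2) = fun y => (2 * ((n : ℝ) + 1 + lam) * y *
        gegenNorm lam (n + 1) y - ((n : ℝ) + 1) * gegenNorm lam n y) /
          ((n : ℝ) + 1 + 2 * lam) := rfl
    rw [hQ]
    refine (((((hasDerivAt_id' x).const_mul _).mul (ih1 x)).sub
      ((ih0 x).const_mul _)).div_const _).congr_deriv ?_
    simp only [gegenNormDeriv]
    ring

section Recurrence

variable {lam : ℝ}

theorem add_one_add_two_mul_pos (hlam : -(1 / 2) < lam) (n : ℕ) : 0 < (n : ℝ) + 1 + 2 * lam := by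
  have := n.cast_nonneg (α := ℝ)
  linarith

theorem gegenNorm_recurrence (hlam : -(1 / 2) < lam) (n : ℕ) (x : ℝ) :
    ((n : ℝ) + 1 + 2 * lam) * gegenNorm lam (n + 2) x =
      2 * ((n : ℝ) + 1 + lam) * x * gegenNorm lam (n + 1) x - ((n : ℝ) + 1) * gegenNorm lam n x :=
  mul_div_cancel₀ _ (add_one_add_two_mul_pos hlam n).ne'

theorem gegenNormDeriv_recurrence (hlam : -(1 / 2) < lam) (n : ℕ) (x : ℝ) :
    ((n : ℝ) + 1 + 2 * lam) * gegenNormDeriv lam (n + 2) x =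
      2 * ((n : ℝ) + 1 + lam) * (gegenNorm lam (n + 1) x + x * gegenNormDeriv lam (n + 1) x) -
        ((n : ℝ) + 1) * gegenNormDeriv lam n x :=
  mul_div_cancel₀ _ (add_one_add_two_mul_pos hlam n).ne'

theorem gegenNorm_one (hlam : -(1 / 2) < lam) (n : ℕ) : gegenNorm lam n 1 = 1 := by
  induction n using Nat.twoStepInduction with
  | zero => rfl
  | one => rfl
  | more n ih0 ih1 =>
    refine mul_left_cancel₀ (add_one_add_two_mul_pos hlam n).ne' ?_
    rw [gegenNorm_recurrence hlam, ih0, ih1]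
    ring

theorem gegenNormDeriv_one (hlam : -(1 / 2) < lam) (n : ℕ) :
    (1 + 2 * lam) * gegenNormDeriv lam n 1 = n * (n + 2 * lam) := by
  induction n using Nat.twoStepInduction with
  | zero => simp [gegenNormDeriv]
  | one => simp [gegenNormDeriv]
  | more n ih0 ih1 =>
    refine mul_left_cancel₀ (add_one_add_two_mul_pos hlam n).ne' ?_
    have h := gegenNormDeriv_recurrence hlam n 1
    rw [gegenNorm_one hlam] at h
    push_cast at ih1 ⊢
    linear_combination (1 + 2 * lam) * h + 2 * ((n : ℝ) + 1 + lam) * ih1 - ((n : ℝ) + 1) * ih0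

theorem sq_sub_one_mul_gegenNormDeriv (hlam : -(1 / 2) < lam) (n : ℕ) (x : ℝ) :
    (x ^ 2 - 1) * gegenNormDeriv lam (n + 1) x =
      ((n : ℝ) + 1) * (x * gegenNorm lam (n + 1) x - gegenNorm lam n x) := by
  induction n using Nat.twoStepInduction with
  | zero => simp only [gegenNorm, gegenNormDeriv, Nat.cast_zero]; ring
  | one =>
    refine mul_left_cancel₀ (add_one_add_two_mul_pos hlam 0).ne' ?_
    have hQ := gegenNorm_recurrence hlam 0 x
    have hD := gegenNormDeriv_recurrence hlam 0 x
    simp only [gegenNorm, gegenNormDeriv] at hQ hD ⊢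
    push_cast at hQ hD ⊢
    linear_combination (x ^ 2 - 1) * hD - 2 * x * hQ
  | more n ih0 ih1 =>
    refine mul_left_cancel₀ (add_one_add_two_mul_pos hlam (n + 1)).ne' ?_
    have hQ := gegenNorm_recurrence hlam n x
    have hQ' := gegenNorm_recurrence hlam (n + 1) x
    have hD' := gegenNormDeriv_recurrence hlam (n + 1) x
    push_cast at ih1 hQ' hD' ⊢
    linear_combination (x ^ 2 - 1) * hD' + 2 * ((n : ℝ) + 2 + lam) * x * ih1 - ((n : ℝ) + 2) * ih0
      - ((n : ℝ) + 3) * x * hQ' + ((n : ℝ) + 2) * hQ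

end Recurrence

theorem chebT_eq_gegenNorm_zero (n : ℕ) : chebT n = gegenNorm 0 n := by
  induction n using Nat.twoStepInduction with
  | zero => rfl
  | one => rfl
  | more n ih0 ih1 =>
    funext x
    have h := gegenNorm_recurrence (lam := 0) (by norm_num) n x
    simp only [chebT, ih0, ih1]
    refine mul_left_cancel₀ (n.cast_add_one_ne_zero (R := ℝ)) ?_
    linear_combination -h

/-- `P_n^{(λ)}(1) = (2λ)_n / n!`. -/
noncomputable def gegenRecAtOne (lam : ℝ) : ℕ → ℝ
  | 0 => 1
  | n + 1 => gegenRecAtOne lam n * (n + 2 * lam) / (n + 1)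

section Scaling

variable {lam : ℝ}

theorem gegenRecAtOne_ne_zero (hlam : -(1 / 2) < lam) (h0 : lam ≠ 0) (n : ℕ) :
    gegenRecAtOne lam n ≠ 0 := by
  induction n with
  | zero => exact one_ne_zero
  | succ n ih =>
    have hn : (n : ℝ) + 2 * lam ≠ 0 := by
      rcases n.eq_zero_or_pos with rfl | hn
      · simpa using h0
      · have : (1 : ℝ) ≤ n := Nat.one_le_cast.mpr hn
        linarith
    exact div_ne_zero (mul_ne_zero ih hn) n.cast_add_one_ne_zero

theorem gegenRec_eq_gegenRecAtOne_mul (hlam : -(1 / 2) < lam) (n : ℕ) (x : ℝ) :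
    gegenRec lam n x = gegenRecAtOne lam n * gegenNorm lam n x := by
  induction n using Nat.twoStepInduction generalizing x with
  | zero => simp [gegenRec, gegenRecAtOne, gegenNorm]
  | one => simp [gegenRec, gegenRecAtOne, gegenNorm]
  | more n ih0 ih1 =>
    have h := gegenNorm_recurrence hlam n x
    have hc (k : ℕ) :
        gegenRecAtOne lam (k + 1) * ((k : ℝ) + 1) = gegenRecAtOne lam k * (k + 2 * lam) :=
      div_mul_cancel₀ _ k.cast_add_one_ne_zero
    have hc' := hc (n + 1)
    push_cast at hc'
    simp only [gegenRec, ih0, ih1]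
    rw [div_eq_iff (by positivity)]
    linear_combination gegenNorm lam n x * hc n - gegenRecAtOne lam (n + 1) * h -
      gegenNorm lam (n + 2) x * hc'

theorem ultra_eq_const_mul_gegenNorm (hlam : -(1 / 2) < lam) (n : ℕ) :
    ∃ c ≠ 0, ultra lam n = fun x => c * gegenNorm lam n x := by
  by_cases h0 : lam = 0
  · subst h0
    exact ⟨1, one_ne_zero, by simp [ultra, chebT_eq_gegenNorm_zero]⟩
  · refine ⟨gegenRecAtOne lam n, gegenRecAtOne_ne_zero hlam h0 n, ?_⟩
    funext x
    simp only [ultra, if_neg h0, gegenRec_eq_gegenRecAtOne_mul hlam]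

theorem uRatio_eq_gegenNormDeriv_div (hlam : -(1 / 2) < lam) (n : ℕ) (x : ℝ) :
    uRatio lam n x = gegenNormDeriv lam n x / gegenNorm lam n x := by
  obtain ⟨c, hc, hultra⟩ := ultra_eq_const_mul_gegenNorm hlam n
  rw [uRatio, hultra, ((hasDerivAt_gegenNorm lam n x).const_mul c).deriv, mul_div_mul_left _ _ hc]

end Scaling

theorem cubic_step_ineq {a c l y : ℝ} (ha : 0 ≤ a) (hc : 0 < c) (hcl : 0 < c + 2 * l) (hy : 1 ≤ y) :
    (c + 2 * l) * y ^ 3 ≤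
      (y - c / (2 * (c + l)) * (y - 1)) * (2 * (c + l) * y ^ 2 - c * (y - a * (y - 1))) := by
  have hsum : 0 < c + l := by linarith
  have hdefect : (y - c / (2 * (c + l)) * (y - 1)) * (2 * (c + l) * y ^ 2 - c * (y - a * (y - 1))) -
      (c + 2 * l) * y ^ 3 = c * (y - 1) * ((c + (c + 2 * l) * a) * y + c * a) / (2 * (c + l)) := by
    field_simp [hsum.ne']
    ring
  have hlin : 0 ≤ (c + (c + 2 * l) * a) * y + c * a :=
    add_nonneg (mul_nonneg (add_nonneg hc.le (mul_nonneg hcl.le ha)) (by linarith))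
      (mul_nonneg hc.le ha)
  rw [← sub_nonneg, hdefect]
  exact div_nonneg (mul_nonneg (mul_nonneg hc.le (sub_nonneg.2 hy)) hlin) (by positivity)

noncomputable def cubicCoeff (lam : ℝ) (m : ℕ) : ℝ := m / (2 * (m + lam))

section Bounds

variable {lam : ℝ}

theorem cubicCoeff_nonneg (hlam : -(1 / 2) < lam) (m : ℕ) : 0 ≤ cubicCoeff lam m := by
  rcases m.eq_zero_or_pos with rfl | hm
  · simp [cubicCoeff]
  · have : (1 : ℝ) ≤ m := Nat.one_le_cast.mpr hm
    exact div_nonneg (by linarith) (by linarith)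

theorem cubicCoeff_mul_le (hlam : -(1 / 2) < lam) (m : ℕ) :
    cubicCoeff lam m * (1 + 2 * lam) ≤ m := by
  rcases m.eq_zero_or_pos with rfl | hm
  · simp [cubicCoeff]
  · have : (1 : ℝ) ≤ m := Nat.one_le_cast.mpr hm
    rw [cubicCoeff, div_mul_eq_mul_div, div_le_iff₀ (by linarith)]
    nlinarith

theorem one_le_sq_sub_cubicCoeff_mul (hlam : -(1 / 2) < lam) (m : ℕ) {x : ℝ} (hx : 1 ≤ x) :
    1 ≤ x ^ 2 - cubicCoeff lam m * (x ^ 2 - 1) := by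
  have hle : cubicCoeff lam m ≤ 1 := by
    rcases m.eq_zero_or_pos with rfl | hm
    · simp [cubicCoeff]
    · have : (1 : ℝ) ≤ m := Nat.one_le_cast.mpr hm
      rw [cubicCoeff, div_le_one (by linarith)]
      linarith
  nlinarith [mul_nonneg (sub_nonneg.2 hle) (sub_nonneg.2 (one_le_pow₀ hx : 1 ≤ x ^ 2))]

theorem gegenNorm_pos_and_ratio_le (hlam : -(1 / 2) < lam) {x : ℝ} (hx : 1 ≤ x) (m : ℕ) :
    0 < gegenNorm lam (m + 1) x ∧
      x ^ 3 * gegenNorm lam m x ≤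
        (x ^ 2 - cubicCoeff lam m * (x ^ 2 - 1)) * gegenNorm lam (m + 1) x := by
  induction m with
  | zero =>
    refine ⟨show 0 < x by linarith, le_of_eq ?_⟩
    simp only [gegenNorm, cubicCoeff, Nat.cast_zero, zero_div, zero_mul, sub_zero]
    ring
  | succ m ih =>
    obtain ⟨hQ, hratio⟩ := ih
    set β := x ^ 2 - cubicCoeff lam m * (x ^ 2 - 1)
    set β' := x ^ 2 - cubicCoeff lam (m + 1) * (x ^ 2 - 1)
    have hβ' : 1 ≤ β' := one_le_sq_sub_cubicCoeff_mul hlam (m + 1) hx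
    have hm := m.cast_nonneg (α := ℝ)
    have he := add_one_add_two_mul_pos hlam m
    have hrec := gegenNorm_recurrence hlam m x
    have hstep : ((m : ℝ) + 1 + 2 * lam) * x ^ 6 ≤
        β' * (2 * ((m : ℝ) + 1 + lam) * x ^ 4 - ((m : ℝ) + 1) * β) := by
      have := cubic_step_ineq (cubicCoeff_nonneg hlam m) (by linarith : (0 : ℝ) < m + 1)
        (by linarith : (0 : ℝ) < m + 1 + 2 * lam) (one_le_pow₀ hx : 1 ≤ x ^ 2)
      simp only [β, β', cubicCoeff] at this ⊢
      push_cast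
      convert this using 2 <;> ring
    have hmain : ((m : ℝ) + 1 + 2 * lam) * x ^ 3 * (x ^ 3 * gegenNorm lam (m + 1) x) ≤
        ((m : ℝ) + 1 + 2 * lam) * x ^ 3 * (β' * gegenNorm lam (m + 2) x) :=
      calc ((m : ℝ) + 1 + 2 * lam) * x ^ 3 * (x ^ 3 * gegenNorm lam (m + 1) x)
          = ((m : ℝ) + 1 + 2 * lam) * x ^ 6 * gegenNorm lam (m + 1) x := by ring
        _ ≤ β' * (2 * ((m : ℝ) + 1 + lam) * x ^ 4 - ((m : ℝ) + 1) * β) * gegenNorm lam (m + 1) x :=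
          mul_le_mul_of_nonneg_right hstep hQ.le
        _ = β' * (2 * ((m : ℝ) + 1 + lam) * x ^ 4 * gegenNorm lam (m + 1) x -
              ((m : ℝ) + 1) * (β * gegenNorm lam (m + 1) x)) := by ring
        _ ≤ β' * (2 * ((m : ℝ) + 1 + lam) * x ^ 4 * gegenNorm lam (m + 1) x -
              ((m : ℝ) + 1) * (x ^ 3 * gegenNorm lam m x)) := by gcongr
        _ = ((m : ℝ) + 1 + 2 * lam) * x ^ 3 * (β' * gegenNorm lam (m + 2) x) := by
          linear_combination (-(β' * x ^ 3)) * hrec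
    have hratio' := le_of_mul_le_mul_left hmain (by positivity)
    exact ⟨pos_of_mul_pos_right (lt_of_lt_of_le (by positivity) hratio') (by linarith), hratio'⟩

theorem gegenNormDeriv_lower_bound (hlam : -(1 / 2) < lam) {x : ℝ} (hx : 1 ≤ x) (m : ℕ) :
    ((m : ℝ) + 1) * (x ^ 2 + cubicCoeff lam m) * gegenNorm lam (m + 1) x ≤
      x ^ 3 * gegenNormDeriv lam (m + 1) x := by
  have hm := m.cast_nonneg (α := ℝ)
  rcases hx.eq_or_lt with rfl | hx1
  · have hD := gegenNormDeriv_one hlam (m + 1)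
    have ha := mul_le_mul_of_nonneg_left (cubicCoeff_mul_le hlam m) (by linarith : (0 : ℝ) ≤ m + 1)
    rw [gegenNorm_one hlam]
    push_cast at hD
    refine le_of_mul_le_mul_left ?_ (by linarith : (0 : ℝ) < 1 + 2 * lam)
    linear_combination ha - hD
  · have ht : 0 < x ^ 2 - 1 := by nlinarith
    have hid := sq_sub_one_mul_gegenNormDeriv hlam m x
    have hratio := mul_le_mul_of_nonneg_left (gegenNorm_pos_and_ratio_le hlam hx m).2
      (by linarith : (0 : ℝ) ≤ m + 1)
    refine le_of_mul_le_mul_left ?_ ht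
    linear_combination hratio - x ^ 3 * hid

end Bounds

theorem ultra_ratio_lower_bound_cubic (n : ℕ) (hn : 1 ≤ n) (lam : ℝ) (hlam : -(1 / 2) < lam)
    (x : ℝ) (hx : 1 ≤ x) :
    uRatio lam n x ≥
      (n : ℝ) * (1 / x + ((n : ℝ) - 1) / (2 * ((n : ℝ) + lam - 1) * x ^ 3)) := by
  obtain ⟨m, rfl⟩ : ∃ m, n = m + 1 := ⟨n - 1, by omega⟩
  have hx3 : 0 < x ^ 3 := by positivity
  have hcoeff : ((m + 1 : ℕ) - 1 : ℝ) / (2 * ((m + 1 : ℕ) + lam - 1) * x ^ 3) =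
      cubicCoeff lam m / x ^ 3 := by
    rw [cubicCoeff, div_div]
    push_cast
    ring_nf
  rw [ge_iff_le, uRatio_eq_gegenNormDeriv_div hlam, hcoeff,
    le_div_iff₀ (gegenNorm_pos_and_ratio_le hlam hx m).1]
  calc ((m + 1 : ℕ) : ℝ) * (1 / x + cubicCoeff lam m / x ^ 3) * gegenNorm lam (m + 1) x
      = ((m : ℝ) + 1) * (x ^ 2 + cubicCoeff lam m) * gegenNorm lam (m + 1) x / x ^ 3 := by
        field_simp
        push_cast
        ring
    _ ≤ x ^ 3 * gegenNormDeriv lam (m + 1) x / x ^ 3 :=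
        (div_le_div_iff_of_pos_right hx3).2 (gegenNormDeriv_lower_bound hlam hx m)
    _ = gegenNormDeriv lam (m + 1) x := by field_simp
end

section
/- Let n ∈ ℕ, n ≥ 1, and λ > -1/2. Then for every real x ≥ 1, u_n(x) = (P_n^{(λ)})'(x)/P_n^{(λ)}(x) ≤ n(1/x + (n-1)/((2λ+1)x³)). -/
/-!
Normalize `P_n` to be positive on `[1, ∞)` and put `μ = 2λ + 1`,
`A_n(x) = n μ x² - n (n - 1) (x² - 1)`. The three-term recurrence propagates
`A_n P_n ≤ μ x³ (n - 1 + 2λ) P_{n-1}` on `[1, ∞)` by induction on `n`: the inductive step reduces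
to a polynomial inequality in `n, μ, x` whose defect is `(x² - 1)²` times a nonnegative factor.
Inserting this into the differential identity `(x² - 1) P_n' = n x P_n - (n - 1 + 2λ) P_{n-1}`
gives the bound for `x > 1`, and continuity gives it at `x = 1`.
-/

lemma gegenbauer_coeff_ineq {ν μ x : ℝ} (hν : 1 ≤ ν) (hμ : 0 ≤ μ) :
    ((ν + 1) * μ * x ^ 2 - (ν + 1) * ν * (x ^ 2 - 1)) *
        ((2 * ν + μ - 1) * x * (μ * x ^ 3) - (ν * μ * x ^ 2 - ν * (ν - 1) * (x ^ 2 - 1)))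
      ≤ (ν + 1) * (ν + μ - 1) * (μ ^ 2 * x ^ 6) := by
  have hsos : (ν + 1) * (ν + μ - 1) * (μ ^ 2 * x ^ 6) -
      ((ν + 1) * μ * x ^ 2 - (ν + 1) * ν * (x ^ 2 - 1)) *
        ((2 * ν + μ - 1) * x * (μ * x ^ 3) - (ν * μ * x ^ 2 - ν * (ν - 1) * (x ^ 2 - 1)))
      = (x ^ 2 - 1) ^ 2 * (ν * (ν + 1) * (ν * (ν - 1) + μ * x ^ 2 * (2 * ν - 1))) := by ring
  have h₁ : 0 ≤ ν * (ν - 1) := mul_nonneg (by linarith) (by linarith)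
  have h₂ : 0 ≤ μ * x ^ 2 * (2 * ν - 1) := by positivity [show 0 ≤ 2 * ν - 1 by linarith]
  rw [← sub_nonneg, hsos]
  positivity

/-- `P n` and `W n` stand for `P_n^{(t)}` and `(n - 1 + 2t) P_{n-1}^{(t)}`, both divided by the
same constant so that `W 1 = 1`. Keeping `W` apart from `P (n - 1)` lets the Chebyshev case `t = 0`
fit the same recurrences, with `P n = T_n / n` and `W n = T_{n-1}`. -/
structure IsGegenbauerPair (t : ℝ) (P W : ℕ → ℝ → ℝ) : Prop where
  w_one : W 1 = fun _ => 1
  p_one : P 1 = fun x => x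
  w_succ : ∀ n, 1 ≤ n → W (n + 1) = fun x => ((n : ℝ) + 2 * t) * P n x
  p_succ : ∀ n, 1 ≤ n →
    P (n + 1) = fun x => (2 * ((n : ℝ) + t) * x * P n x - W n x) / ((n : ℝ) + 1)

namespace IsGegenbauerPair

variable {t : ℝ} {P W : ℕ → ℝ → ℝ}

lemma succ_mul_p_succ (h : IsGegenbauerPair t P W) {n : ℕ} (hn : 1 ≤ n) (x : ℝ) :
    ((n : ℝ) + 1) * P (n + 1) x = 2 * ((n : ℝ) + t) * x * P n x - W n x := by
  rw [h.p_succ n hn]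
  field_simp

lemma contDiff (h : IsGegenbauerPair t P W) {n : ℕ} (hn : 1 ≤ n) :
    ContDiff ℝ 1 (P n) ∧ ContDiff ℝ 1 (W n) := by
  induction n, hn using Nat.le_induction with
  | base => rw [h.p_one, h.w_one]; exact ⟨contDiff_id, contDiff_const⟩
  | succ n hn ih =>
    rw [h.p_succ n hn, h.w_succ n hn]
    obtain ⟨hP, hW⟩ := ih
    exact ⟨by fun_prop, by fun_prop⟩

lemma sq_sub_one_mul_deriv (h : IsGegenbauerPair t P W) {n : ℕ} (hn : 1 ≤ n) (x : ℝ) :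
    (x ^ 2 - 1) * deriv (P n) x = n * x * P n x - W n x ∧
      (x ^ 2 - 1) * deriv (W n) x = ((n : ℝ) - 1 + 2 * t) * (n * P n x - x * W n x) := by
  induction n, hn using Nat.le_induction generalizing x with
  | base =>
    simp only [h.p_one, h.w_one, deriv_id'', deriv_const']
    constructor <;> push_cast <;> ring
  | succ n hn ih =>
    obtain ⟨hP, hW⟩ := h.contDiff hn
    have hdP := (hP.differentiable one_ne_zero x).hasDerivAt
    have hdW := (hW.differentiable one_ne_zero x).hasDerivAt
    have hdP' : HasDerivAt (P (n + 1))
        ((2 * ((n : ℝ) + t) * (P n x + x * deriv (P n) x) - deriv (W n) x) / ((n : ℝ) + 1))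
        x := by
      rw [h.p_succ n hn]
      exact ((((hasDerivAt_id' x).const_mul (2 * ((n : ℝ) + t))).fun_mul hdP).fun_sub
        hdW).div_const ((n : ℝ) + 1) |>.congr_deriv (by ring)
    have hdW' : HasDerivAt (W (n + 1)) (((n : ℝ) + 2 * t) * deriv (P n) x) x := by
      rw [h.w_succ n hn]; exact hdP.const_mul _
    obtain ⟨ihP, ihW⟩ := ih x
    have hrec := h.succ_mul_p_succ hn x
    have hn' : (n : ℝ) + 1 ≠ 0 := by positivity
    have hderiv : ((n : ℝ) + 1) * deriv (P (n + 1)) x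
        = 2 * ((n : ℝ) + t) * (P n x + x * deriv (P n) x) - deriv (W n) x := by
      rw [hdP'.deriv]; field_simp
    rw [hdW'.deriv, h.w_succ n hn]
    push_cast
    constructor
    · apply mul_left_cancel₀ hn'
      linear_combination (x ^ 2 - 1) * hderiv + 2 * ((n : ℝ) + t) * x * ihP - ihW
        - ((n : ℝ) + 1) * x * hrec
    · linear_combination ((n : ℝ) + 2 * t) * ihP - ((n : ℝ) + 2 * t) * hrec

variable {x : ℝ}

lemma w_pos_and_mul_w_le (h : IsGegenbauerPair t P W) (ht : 0 < 2 * t + 1) (hx : 1 ≤ x)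
    {n : ℕ} (hn : 1 ≤ n) : 0 < W n x ∧ x * W n x ≤ n * P n x := by
  induction n, hn using Nat.le_induction with
  | base => simp [h.p_one, h.w_one]
  | succ n hn ih =>
    obtain ⟨hW, hxW⟩ := ih
    have hn' : (1 : ℝ) ≤ n := by exact_mod_cast hn
    have hP : 0 < P n x := by nlinarith
    have hrec := h.succ_mul_p_succ hn x
    rw [h.w_succ n hn]
    push_cast
    refine ⟨by positivity [show (0 : ℝ) < n + 2 * t by linarith], ?_⟩
    -- `W n x ≤ n * P n x / x ≤ n * x * P n x`
    nlinarith [mul_le_mul_of_nonneg_left hx (show 0 ≤ n * P n x by positivity)]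

lemma p_pos (h : IsGegenbauerPair t P W) (ht : 0 < 2 * t + 1) (hx : 1 ≤ x)
    {n : ℕ} (hn : 1 ≤ n) : 0 < P n x := by
  obtain ⟨hW, hxW⟩ := h.w_pos_and_mul_w_le ht hx hn
  have hn' : (1 : ℝ) ≤ n := by exact_mod_cast hn
  nlinarith

lemma mul_p_le_w (h : IsGegenbauerPair t P W) (ht : 0 < 2 * t + 1) (hx : 1 ≤ x)
    {n : ℕ} (hn : 1 ≤ n) :
    (n * (2 * t + 1) * x ^ 2 - n * (n - 1) * (x ^ 2 - 1)) * P n x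
      ≤ (2 * t + 1) * x ^ 3 * W n x := by
  induction n, hn using Nat.le_induction with
  | base => exact le_of_eq (by simp only [h.p_one, h.w_one]; push_cast; ring)
  | succ n hn ih =>
    set μ := 2 * t + 1
    have hn' : (1 : ℝ) ≤ n := by exact_mod_cast hn
    have hP := h.p_pos ht hx hn
    have hP' := h.p_pos ht hx (hn.trans n.le_succ)
    have hμx : 0 < μ * x ^ 3 := by positivity
    rw [h.w_succ n hn]
    push_cast
    rw [add_sub_cancel_right]
    set A := ((n : ℝ) + 1) * μ * x ^ 2 - ((n : ℝ) + 1) * n * (x ^ 2 - 1)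
    rcases le_or_gt A 0 with hA | hA
    · have : 0 ≤ μ * x ^ 3 * ((n + 2 * t) * P n x) := by
        positivity [show (0 : ℝ) < n + 2 * t by linarith]
      nlinarith
    · have hcoeff := gegenbauer_coeff_ineq (x := x) hn' ht.le
      have hrec := h.succ_mul_p_succ hn x
      refine le_of_mul_le_mul_left ?_ (mul_pos hμx (show (0 : ℝ) < n + 1 by linarith))
      calc μ * x ^ 3 * ((n : ℝ) + 1) * (A * P (n + 1) x)
          = A * (2 * (n + t) * x * (μ * x ^ 3) * P n x) - A * (μ * x ^ 3 * W n x) := by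
            linear_combination A * μ * x ^ 3 * hrec
        _ ≤ A * (2 * (n + t) * x * (μ * x ^ 3) * P n x)
              - A * ((n * μ * x ^ 2 - n * (n - 1) * (x ^ 2 - 1)) * P n x) := by
            gcongr
        _ ≤ (n + 1) * (n + μ - 1) * (μ ^ 2 * x ^ 6) * P n x := by
            nlinarith [mul_le_mul_of_nonneg_right hcoeff hP.le]
        _ = μ * x ^ 3 * ((n : ℝ) + 1) * (μ * x ^ 3 * ((n + 2 * t) * P n x)) := by ring

lemma deriv_div_le_of_one_lt (h : IsGegenbauerPair t P W) (ht : 0 < 2 * t + 1) (hx : 1 < x)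
    {n : ℕ} (hn : 1 ≤ n) :
    deriv (P n) x / P n x ≤ n * (1 / x + (n - 1) / ((2 * t + 1) * x ^ 3)) := by
  set μ := 2 * t + 1
  have hP := h.p_pos ht hx.le hn
  have hW := h.mul_p_le_w ht hx.le hn
  have hI := (h.sq_sub_one_mul_deriv hn x).1
  have hx2 : 0 < x ^ 2 - 1 := by nlinarith
  have hμx : 0 < μ * x ^ 3 := by positivity
  rw [div_le_iff₀ hP]
  refine le_of_mul_le_mul_left ?_ (mul_pos hx2 hμx)
  calc (x ^ 2 - 1) * (μ * x ^ 3) * deriv (P n) x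
      = μ * x ^ 3 * (n * x * P n x) - μ * x ^ 3 * W n x := by linear_combination μ * x ^ 3 * hI
    _ ≤ μ * x ^ 3 * (n * x * P n x) - (n * μ * x ^ 2 - n * (n - 1) * (x ^ 2 - 1)) * P n x := by
      gcongr
    _ = (x ^ 2 - 1) * (μ * x ^ 3) * (n * (1 / x + (n - 1) / (μ * x ^ 3)) * P n x) := by
      field_simp
      ring

lemma deriv_div_le (h : IsGegenbauerPair t P W) (ht : 0 < 2 * t + 1) (hx : 1 ≤ x)
    {n : ℕ} (hn : 1 ≤ n) :
    deriv (P n) x / P n x ≤ n * (1 / x + (n - 1) / ((2 * t + 1) * x ^ 3)) := by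
  -- both sides are continuous on `[1, ∞)`, so the bound extends from `(1, ∞)` to its closure
  have hP := (h.contDiff hn).1
  have hx0 : 0 < x := by linarith
  refine ContinuousWithinAt.closure_le (f := fun y => deriv (P n) y / P n y)
    (g := fun y => n * (1 / y + (n - 1) / ((2 * t + 1) * y ^ 3))) (s := Set.Ioi (1 : ℝ))
    (by rwa [closure_Ioi]) ?_ ?_ fun y hy => h.deriv_div_le_of_one_lt ht hy hn
  · exact ((hP.continuous_deriv le_rfl).continuousAt.div hP.continuous.continuousAt
      (h.p_pos ht hx hn).ne').continuousWithinAt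
  · exact (continuousAt_const.mul ((continuousAt_const.div continuousAt_id hx0.ne').add
      (continuousAt_const.div (continuousAt_const.mul (continuousAt_id.pow 3))
        (mul_pos ht (pow_pos hx0 3)).ne'))).continuousWithinAt

end IsGegenbauerPair

lemma isGegenbauerPair_chebT :
    IsGegenbauerPair 0 (fun n x => chebT n x / n) (fun n => chebT (n - 1)) where
  w_one := rfl
  p_one := by funext x; simp [chebT]
  w_succ n hn := by
    have : (n : ℝ) ≠ 0 := by positivity
    funext x
    rw [Nat.add_sub_cancel, mul_zero, add_zero]
    field_simp
  p_succ n hn := by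
    obtain ⟨m, rfl⟩ := Nat.exists_eq_add_of_le' hn
    funext x
    simp only [chebT, Nat.add_sub_cancel]
    push_cast
    field_simp
    ring

lemma isGegenbauerPair_gegenRec {t : ℝ} (ht : t ≠ 0) :
    IsGegenbauerPair t (fun n x => gegenRec t n x / (2 * t))
      (fun n x => ((n : ℝ) - 1 + 2 * t) * gegenRec t (n - 1) x / (2 * t)) where
  w_one := by funext x; simp [gegenRec, ht]
  p_one := by funext x; simp [gegenRec, ht]
  w_succ n hn := by funext x; rw [Nat.add_sub_cancel]; push_cast; ring
  p_succ n hn := by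
    obtain ⟨m, rfl⟩ := Nat.exists_eq_add_of_le' hn
    funext x
    simp only [gegenRec, Nat.add_sub_cancel]
    push_cast
    field_simp
    ring

lemma exists_isGegenbauerPair_ultra_eq (lam : ℝ) {n : ℕ} (hn : 1 ≤ n) :
    ∃ P W, IsGegenbauerPair lam P W ∧ ∃ c ≠ 0, ultra lam n = fun x => c * P n x := by
  by_cases hlam : lam = 0
  · subst hlam
    refine ⟨_, _, isGegenbauerPair_chebT, n, by positivity, ?_⟩
    have : (n : ℝ) ≠ 0 := by positivity
    rw [ultra, if_pos rfl]
    funext x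
    field_simp
  · refine ⟨_, _, isGegenbauerPair_gegenRec hlam, 2 * lam, by positivity, ?_⟩
    rw [ultra, if_neg hlam]
    funext x
    field_simp

theorem ultra_ratio_upper_bound_cubic (n : ℕ) (hn : 1 ≤ n) (lam : ℝ) (hlam : -(1 / 2) < lam)
    (x : ℝ) (hx : 1 ≤ x) :
    uRatio lam n x ≤
      (n : ℝ) * (1 / x + ((n : ℝ) - 1) / ((2 * lam + 1) * x ^ 3)) := by
  obtain ⟨P, W, hPW, c, hc, hult⟩ := exists_isGegenbauerPair_ultra_eq lam hn
  rw [uRatio, hult, deriv_const_mul_field, mul_div_mul_left _ _ hc]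
  exact hPW.deriv_div_le (by linarith) hx hn
end

section
/- For every natural number n and every real x, the n-th Legendre polynomial satisfies P_n(x) = 2^{-n} Σ_{k=0}^{n} C(n,k)² (x-1)^k (x+1)^{n-k}. -/
/-!
Write `(x² - 1)ⁿ = (x - 1)ⁿ (x + 1)ⁿ` and differentiate `n` times by the Leibniz rule. The
`k`-th term puts `n - k` derivatives on `(x - 1)ⁿ` and `k` on `(x + 1)ⁿ`, leaving
`C(n,k) · n!/k! · n!/(n-k)! · (x - 1)ᵏ (x + 1)ⁿ⁻ᵏ = n! · C(n,k)² · (x - 1)ᵏ (x + 1)ⁿ⁻ᵏ`,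
and the factor `n!` cancels against Rodrigues' normalisation.
-/

open Polynomial Finset

theorem Nat.choose_mul_descFactorial_sub_mul_descFactorial {n k : ℕ} (hk : k ≤ n) :
    n.choose k * (n.descFactorial (n - k) * n.descFactorial k) =
      n.factorial * n.choose k ^ 2 := by
  rw [Nat.descFactorial_eq_factorial_mul_choose n (n - k),
    Nat.descFactorial_eq_factorial_mul_choose n k, Nat.choose_symm hk,
    ← Nat.choose_mul_factorial_mul_factorial hk]
  ring

namespace Polynomial

theorem iteratedDeriv_eval_s19 {𝕜 : Type*} [NontriviallyNormedField 𝕜] (n : ℕ) (p : 𝕜[X]) :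
    iteratedDeriv n (fun x => p.eval x) = fun x => (derivative^[n] p).eval x := by
  induction n generalizing p with
  | zero => simp
  | succ n ih =>
    have hderiv : (deriv fun x => p.eval x) = fun x => (derivative p).eval x := by
      ext x
      exact p.deriv
    rw [iteratedDeriv_succ', hderiv, ih]
    rfl

theorem iterate_derivative_X_sub_pow_mul_X_add_pow {R : Type*} [CommRing R]
    (n : ℕ) (a b : R) :
    derivative^[n] ((X - C a) ^ n * (X + C b) ^ n) =
      n.factorial •
        ∑ k ∈ range (n + 1), n.choose k ^ 2 • ((X - C a) ^ k * (X + C b) ^ (n - k)) := by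
  rw [iterate_derivative_mul, smul_sum]
  refine sum_congr rfl fun k hk => ?_
  have hkn : k ≤ n := Nat.lt_succ_iff.mp (mem_range.mp hk)
  rw [iterate_derivative_X_sub_pow, iterate_derivative_X_add_pow, Nat.sub_sub_self hkn,
    smul_mul_smul_comm, smul_smul, smul_smul,
    Nat.choose_mul_descFactorial_sub_mul_descFactorial hkn]

end Polynomial

theorem legendre_binomial_representation (n : ℕ) (x : ℝ) :
    legendreP n x =
      (1 / 2 ^ n) *
        ∑ k ∈ Finset.range (n + 1),
          ((n.choose k : ℝ)) ^ 2 * (x - 1) ^ k * (x + 1) ^ (n - k) := by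
  have hfactor : (fun y : ℝ => (y ^ 2 - 1) ^ n) =
      fun y => ((X - C 1) ^ n * (X + C 1) ^ n : ℝ[X]).eval y := by
    funext y
    simp only [eval_mul, eval_pow, eval_sub, eval_add, eval_X, eval_C, ← mul_pow]
    ring
  have hfact : (n.factorial : ℝ) ≠ 0 := Nat.cast_ne_zero.mpr n.factorial_ne_zero
  rw [legendreP, hfactor, iteratedDeriv_eval_s19,
    iterate_derivative_X_sub_pow_mul_X_add_pow]
  simp only [nsmul_eq_mul, eval_mul, eval_natCast, eval_finsetSum, eval_pow, eval_sub,
    eval_add, eval_X, eval_C, Nat.cast_pow, mul_assoc]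
  field_simp
end
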